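/- The function g(s,s') = [(I + R̂R̂)·|s'−s|/‖R‖ · f(s') − (I + ττ) f(s)]/(s'−s), with R = X(s)−X(s'), arising in the finite part integral of slender body theory, has the limit as s' → s: (1/2)(τ(s) X_{ss}(s)ᵀ + X_{ss}(s) τ(s)ᵀ) f(s) + (I + τ(s)τ(s)ᵀ) f_s(s), assuming X is C² with ‖X_s‖ ≡ 1 and f is C¹. -/

import Mathlib

open Matrix Filter

noncomputable def norm3 (u : Fin 3 → ℝ) : ℝ := Real.sqrt (u ⬝ᵥ u)

/-!
Write `V = dslope X s`, so that `R = X s - X s' = (s - s') • V s'`. Then `|s' - s| / ‖R‖ = ‖V s'‖⁻¹`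
and `R̂R̂ᵀ` is the projection onto `V s'`, so `g` is exactly the difference quotient at `s` of
`A t = ‖V t‖⁻¹ • (f t + proj_{V t} (f t))`, and the limit is `A'(s)`. Second-order Taylor gives
`V s = τ` and `V'(s) = X_ss / 2`; unit speed gives `τ ⬝ X_ss = 0`, so `‖V‖` is stationary at `s`
and only the projection and `f` contribute to `A'(s)`.
-/

open Topology

section Taylor

variable {E : Type*} [NormedAddCommGroup E] [NormedSpace ℝ E]

theorem taylorWithinEval_two_univ (f : ℝ → E) (a x : ℝ) :
    taylorWithinEval f 2 Set.univ a x =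
      f a + (x - a) • deriv f a + ((x - a) ^ 2 / 2) • deriv (deriv f) a := by
  norm_num [taylor_within_apply, iteratedDerivWithin_univ, iteratedDeriv_succ, div_eq_inv_mul]

theorem ContDiff.hasDerivAt_dslope_same {f : ℝ → E} (hf : ContDiff ℝ 2 f) (a : ℝ) :
    HasDerivAt (dslope f a) ((2 : ℝ)⁻¹ • deriv (deriv f) a) a := by
  rw [hasDerivAt_iff_tendsto_slope]
  have h := taylor_tendsto convex_univ (Set.mem_univ a) hf.contDiffOn
  rw [nhdsWithin_univ] at h
  have h' := (h.mono_left (nhdsWithin_le_nhds (s := {a}ᶜ))).add_const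
    ((2 : ℝ)⁻¹ • deriv (deriv f) a)
  rw [zero_add] at h'
  -- the slope of `dslope f a` at `y` is the Taylor remainder quotient plus `f''(a) / 2`
  refine h'.congr' ?_
  filter_upwards [self_mem_nhdsWithin] with y hy
  have hy' : y - a ≠ 0 := sub_ne_zero.mpr hy
  rw [taylorWithinEval_two_univ, slope_def_module, dslope_same, dslope_of_ne _ hy,
    slope_def_module]
  match_scalars <;> field_simp
  ring

end Taylor

section DotProduct

variable {ι : Type*} [Fintype ι]

theorem HasDerivAt.dotProduct {𝕜 : Type*} [NontriviallyNormedField 𝕜] {u v : 𝕜 → ι → 𝕜}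
    {u' v' : ι → 𝕜} {x : 𝕜} (hu : HasDerivAt u u' x) (hv : HasDerivAt v v' x) :
    HasDerivAt (fun t => u t ⬝ᵥ v t) (u' ⬝ᵥ v x + u x ⬝ᵥ v') x := by
  simp only [_root_.dotProduct]
  rw [← Finset.sum_add_distrib]
  exact HasDerivAt.fun_sum fun i _ => by
    simpa [mul_comm] using (hasDerivAt_pi.mp hu i).fun_mul (hasDerivAt_pi.mp hv i)

theorem HasDerivAt.dotProduct_eq_zero_of_dotProduct_self_const {u : ℝ → ι → ℝ} {u' : ι → ℝ}
    {x c : ℝ} (hu : HasDerivAt u u' x) (hc : ∀ t, u t ⬝ᵥ u t = c) : u x ⬝ᵥ u' = 0 := by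
  have h := (hu.dotProduct hu).unique ((hasDerivAt_const x c).congr_of_eventuallyEq
    (Eventually.of_forall hc))
  rw [dotProduct_comm] at h
  linarith

theorem dotProduct_self_nonneg (v : ι → ℝ) : 0 ≤ v ⬝ᵥ v :=
  Finset.sum_nonneg fun i _ => mul_self_nonneg (v i)

theorem sqrt_dotProduct_smul_self (c : ℝ) (v : ι → ℝ) :
    √((c • v) ⬝ᵥ (c • v)) = |c| * √(v ⬝ᵥ v) := by
  rw [smul_dotProduct, dotProduct_smul, smul_eq_mul, smul_eq_mul, ← mul_assoc,
    Real.sqrt_mul (mul_self_nonneg c), Real.sqrt_mul_self_eq_abs]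

/-- Projection of `w` onto the line through `v`; it is `0` for `v = 0`, as `x / 0 = 0`. -/
noncomputable def lineProj (v w : ι → ℝ) : ι → ℝ := ((v ⬝ᵥ w) / (v ⬝ᵥ v)) • v

theorem inv_sqrt_smul_dotProduct_smul_eq_lineProj (v w : ι → ℝ) :
    (((√(v ⬝ᵥ v))⁻¹ • v) ⬝ᵥ w) • ((√(v ⬝ᵥ v))⁻¹ • v) = lineProj v w := by
  rw [lineProj, smul_dotProduct, smul_smul, smul_eq_mul, mul_right_comm, ← mul_inv,
    Real.mul_self_sqrt (dotProduct_self_nonneg v), div_eq_inv_mul]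

theorem lineProj_smul_left {c : ℝ} (hc : c ≠ 0) (v w : ι → ℝ) :
    lineProj (c • v) w = lineProj v w := by
  simp only [lineProj, smul_dotProduct, dotProduct_smul, smul_eq_mul, smul_smul]
  by_cases hv : v ⬝ᵥ v = 0
  · simp [hv]
  · congr 1
    field_simp

theorem HasDerivAt.inv_sqrt_smul_add_lineProj {v f : ℝ → ι → ℝ} {v' f' : ι → ℝ} {x : ℝ}
    (hv : HasDerivAt v v' x) (hf : HasDerivAt f f' x) (hunit : v x ⬝ᵥ v x = 1)
    (horth : v x ⬝ᵥ v' = 0) :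
    HasDerivAt (fun t => (√(v t ⬝ᵥ v t))⁻¹ • (f t + lineProj (v t) (f t)))
      (f' + (v' ⬝ᵥ f x + v x ⬝ᵥ f') • v x + (v x ⬝ᵥ f x) • v') x := by
  have hvv : HasDerivAt (fun t => v t ⬝ᵥ v t) 0 x := by
    simpa [dotProduct_comm v', horth] using hv.dotProduct hv
  have hsqrt : HasDerivAt (fun t => (√(v t ⬝ᵥ v t))⁻¹) 0 x := by
    simpa [hunit] using
      ((Real.hasDerivAt_sqrt (by simp [hunit])).comp x hvv).fun_inv (by simp [hunit])
  have hcoef : HasDerivAt (fun t => (v t ⬝ᵥ f t) / (v t ⬝ᵥ v t)) (v' ⬝ᵥ f x + v x ⬝ᵥ f') x := by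
    simpa [hunit] using (hv.dotProduct hf).fun_div hvv (by simp [hunit])
  have h := hsqrt.fun_smul (hf.fun_add (hcoef.fun_smul hv))
  simp only [hunit, Real.sqrt_one, inv_one, one_smul, zero_smul, add_zero, div_one] at h
  simpa only [lineProj, add_assoc, add_comm ((v x ⬝ᵥ f x) • v')] using h

end DotProduct

/-- the finite-part integrand
`g(s,s') = [(I + R̂R̂ᵀ)(|s'−s|/‖R‖) f(s') − (I + ττᵀ) f(s)]/(s'−s)`, with
`R = X(s) − X(s')`, tends as `s' → s` to
`(1/2)((X_ss·f)τ + (τ·f)X_ss) + f_s + (τ·f_s)τ` for a C² unit-speed `X` and C¹ `f`. -/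
theorem stmt_17 (X f : ℝ → Fin 3 → ℝ)
    (hX : ContDiff ℝ 2 X) (hf : ContDiff ℝ 1 f)
    (hunit : ∀ u, norm3 (deriv X u) = 1)
    (s : ℝ) (g : ℝ → Fin 3 → ℝ)
    (hg : ∀ s', g s' = (s' - s)⁻¹ •
      ((|s' - s| / norm3 (X s - X s')) •
          (f s' + ((((norm3 (X s - X s'))⁻¹ • (X s - X s')) ⬝ᵥ f s') •
            ((norm3 (X s - X s'))⁻¹ • (X s - X s')))) -
        (f s + ((deriv X s) ⬝ᵥ f s) • deriv X s))) :
    Tendsto g (nhdsWithin s {s}ᶜ)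
      (nhds ((1 / 2 : ℝ) • (((deriv (deriv X) s) ⬝ᵥ f s) • deriv X s +
          ((deriv X s) ⬝ᵥ f s) • deriv (deriv X) s) +
        (deriv f s + ((deriv X s) ⬝ᵥ deriv f s) • deriv X s))) := by
  set V := dslope X s
  set A := fun t => (√(V t ⬝ᵥ V t))⁻¹ • (f t + lineProj (V t) (f t))
  have hτ : ∀ u, deriv X u ⬝ᵥ deriv X u = 1 := fun u => Real.sqrt_eq_one.mp (hunit u)
  have hXss : HasDerivAt (deriv X) (deriv (deriv X) s) s :=
    (((contDiff_succ_iff_deriv (n := 1)).mp hX).2.2.differentiable one_ne_zero s).hasDerivAt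
  have horth : deriv X s ⬝ᵥ deriv (deriv X) s = 0 :=
    hXss.dotProduct_eq_zero_of_dotProduct_self_const hτ
  have hA := (hX.hasDerivAt_dslope_same s).inv_sqrt_smul_add_lineProj
    (hf.differentiable one_ne_zero s).hasDerivAt (by rw [dslope_same]; exact hτ s)
    (by rw [dslope_same, dotProduct_smul, horth, smul_zero])
  have hslope : ∀ y ≠ s, g y = slope A s y := by
    intro y hy
    have hR : X s - X y = (s - y) • V y := by
      rw [← neg_sub y s, neg_smul, sub_smul_dslope, neg_sub]
    have hAs : A s = f s + (deriv X s ⬝ᵥ f s) • deriv X s := by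
      simp only [A, V, dslope_same, lineProj, hτ s, Real.sqrt_one, inv_one, one_smul, div_one]
    rw [hg, slope_def_module, hAs, norm3, hR, inv_sqrt_smul_dotProduct_smul_eq_lineProj,
      lineProj_smul_left (sub_ne_zero.mpr hy.symm), sqrt_dotProduct_smul_self, abs_sub_comm s y,
      div_mul_cancel_left₀ (abs_ne_zero.mpr (sub_ne_zero.mpr hy))]
  have heq : slope A s =ᶠ[𝓝[≠] s] g :=
    eventually_nhdsWithin_of_forall fun y hy => (hslope y hy).symm
  refine (hasDerivAt_iff_tendsto_slope.mp (hA.congr_deriv ?_)).congr' heq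
  rw [dslope_same, smul_dotProduct, smul_eq_mul]
  module
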